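/- Let a, λ, c > 0 and M(x) = (c/(1 − exp(a/λ))) · exp((a/λ)x). Let w : [0,∞) × [0,1] → ℝ be continuously differentiable and satisfy w_t(t,x) + λ w_x(t,x) = 0 for all t ≥ 0 and x ∈ [0,1], w(t,0) = w(t,1) for all t ≥ 0, and ∫₀¹ M(x) w(t,x) dx = 0 for all t ≥ 0. Then w vanishes identically: w(t,x) = 0 for all t ≥ 0 and all x ∈ [0,1]. In other words, the pair consisting of the periodic transport dynamics and the output w ↦ ∫₀¹ M(x)w(x)dx is approximately observable in infinite time along classical solutions. -/

import Mathlib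

open MeasureTheory

/-- The forwarding gain `M(x) = (c/(1 − e^{a/λ})) e^{(a/λ)x}`, unique solution of
`λM′ = aM` on `[0,1]` with `M(0) = M(1) + c`. -/
noncomputable def Mfun (a lam c : ℝ) (x : ℝ) : ℝ :=
  (c / (1 - Real.exp (a / lam))) * Real.exp ((a / lam) * x)

/-!
Integrating by parts in `x`, with `λM' = aM`, `M(0) - M(1) = c`, the periodic boundary condition
and the vanishing output, gives `∫₀¹ M w_t(t,·) = λc · w(t,1)`. Integrating this in time, the
left side becomes the difference of two outputs, so `∫₀ᵀ w(s,1) ds = 0` for every `T` and the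
boundary trace `w(·,1)` vanishes. Finally `w` is constant along the characteristics
`s ↦ (t + s/λ, x + s)`, each of which reaches the boundary `x = 1`.
-/

open Set Filter Topology Asymptotics Function

theorem hasFDerivWithinAt_uncurry_of_partial {F : Type*} [NormedAddCommGroup F]
    [NormedSpace ℝ F] {f f₁ f₂ : ℝ → ℝ → F} {I J : Set ℝ} (hI : I.OrdConnected)
    {u : ℝ × ℝ} (hu : u ∈ I ×ˢ J)
    (hf₁ : ∀ p ∈ I ×ˢ J, HasDerivWithinAt (f · p.2) (f₁ p.1 p.2) I p.1)
    (hf₁c : ContinuousWithinAt (↿f₁) (I ×ˢ J) u)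
    (hf₂ : HasDerivWithinAt (f u.1 ·) (f₂ u.1 u.2) J u.2) :
    HasFDerivWithinAt (↿f) ((ContinuousLinearMap.fst ℝ ℝ ℝ).smulRight (f₁ u.1 u.2) +
      (ContinuousLinearMap.snd ℝ ℝ ℝ).smulRight (f₂ u.1 u.2)) (I ×ˢ J) u := by
  -- Mean value theorem in the first variable, along the segment from `(u.1, p.2)` to `p`,
  -- on which `f₁` stays close to `f₁ u` by continuity at `u`.
  have h₁ : (fun p : ℝ × ℝ => f p.1 p.2 - f u.1 p.2 - (p.1 - u.1) • f₁ u.1 u.2)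
      =o[𝓝[I ×ˢ J] u] fun p => p.1 - u.1 := by
    refine isLittleO_iff.2 fun ε hε => ?_
    obtain ⟨δ, hδ, hclose⟩ := Metric.continuousWithinAt_iff.1 hf₁c ε hε
    filter_upwards [self_mem_nhdsWithin, mem_nhdsWithin_of_mem_nhds (Metric.ball_mem_nhds u hδ)]
      with p hp hpδ
    have hseg := hI.uIcc_subset hu.1 hp.1
    have hderiv : ∀ y ∈ uIcc u.1 p.1, HasDerivWithinAt (fun y => f y p.2 - y • f₁ u.1 u.2)
        (f₁ y p.2 - f₁ u.1 u.2) (uIcc u.1 p.1) y := fun y hy =>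
      ((hf₁ (y, p.2) ⟨hseg hy, hp.2⟩).mono hseg).sub
        ((hasDerivWithinAt_id y _).smul_const (f₁ u.1 u.2) |>.congr_deriv (one_smul ℝ _))
    have hbound : ∀ y ∈ uIcc u.1 p.1, ‖f₁ y p.2 - f₁ u.1 u.2‖ ≤ ε := by
      intro y hy
      rw [← dist_eq_norm]
      refine (hclose (x := (y, p.2)) ⟨hseg hy, hp.2⟩ ?_).le
      rw [Metric.mem_ball, Prod.dist_eq] at hpδ
      rw [Prod.dist_eq]
      refine lt_of_le_of_lt (max_le_max ?_ le_rfl) hpδ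
      simpa only [Real.dist_eq] using abs_sub_left_of_mem_uIcc hy
    have := (convex_uIcc u.1 p.1).norm_image_sub_le_of_norm_hasDerivWithin_le hderiv hbound
      left_mem_uIcc right_mem_uIcc
    convert this using 2
    rw [sub_smul]
    abel
  have hsnd : Tendsto Prod.snd (𝓝[I ×ˢ J] u) (𝓝[J] u.2) :=
    tendsto_nhdsWithin_of_tendsto_nhds_of_eventually_within _
      continuous_snd.continuousWithinAt.tendsto (eventually_mem_nhdsWithin.mono fun p hp => hp.2)
  have h₂ : (fun p : ℝ × ℝ => f u.1 p.2 - f u.1 u.2 - (p.2 - u.2) • f₂ u.1 u.2)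
      =o[𝓝[I ×ˢ J] u] fun p => p.2 - u.2 :=
    hf₂.isLittleO.comp_tendsto hsnd
  refine hasFDerivWithinAt_iff_isLittleO.2 <|
    ((h₁.trans_isBigO (isBigO_fst_prod' (f' := fun p => p - u))).add
      (h₂.trans_isBigO (isBigO_snd_prod' (f' := fun p => p - u)))).congr_left fun p => ?_
  show _ = f p.1 p.2 - f u.1 u.2 - _
  simp only [add_apply, ContinuousLinearMap.smulRight_apply, ContinuousLinearMap.coe_fst',
    ContinuousLinearMap.coe_snd', Prod.fst_sub, Prod.snd_sub]
  abel

theorem transport_eq_along_characteristic {lam : ℝ} (hlam : 0 < lam) {w wt wx : ℝ → ℝ → ℝ}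
    (hwt : ∀ t ∈ Ici (0:ℝ), ∀ x ∈ Icc (0:ℝ) 1,
      HasDerivWithinAt (fun τ => w τ x) (wt t x) (Ici 0) t)
    (hwx : ∀ t ∈ Ici (0:ℝ), ∀ x ∈ Icc (0:ℝ) 1,
      HasDerivWithinAt (fun y => w t y) (wx t x) (Icc 0 1) x)
    (hwtc : ContinuousOn (fun q : ℝ × ℝ => wt q.1 q.2) (Ici 0 ×ˢ Icc 0 1))
    (hpde : ∀ t ∈ Ici (0:ℝ), ∀ x ∈ Icc (0:ℝ) 1, wt t x + lam * wx t x = 0)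
    {t x s : ℝ} (ht : 0 ≤ t) (hx : 0 ≤ x) (hs : 0 ≤ s) (hxs : x + s ≤ 1) :
    w (t + s / lam) (x + s) = w t x := by
  set γ : ℝ → ℝ × ℝ := fun r => (t + r / lam, x + r)
  have hγ : MapsTo γ (Icc 0 s) (Ici 0 ×ˢ Icc 0 1) := fun r hr =>
    ⟨add_nonneg ht (div_nonneg hr.1 hlam.le),
      by simp only [γ, mem_Icc]; constructor <;> linarith [hr.1, hr.2]⟩
  have hderiv : ∀ r ∈ Icc 0 s, HasDerivWithinAt (↿w ∘ γ) 0 (Icc 0 s) r := by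
    intro r hr
    have hw := hasFDerivWithinAt_uncurry_of_partial ordConnected_Ici (hγ hr)
      (fun p hp => hwt p.1 hp.1 p.2 hp.2) (hwtc _ (hγ hr)) (hwx _ (hγ hr).1 _ (hγ hr).2)
    have hγ' : HasDerivWithinAt γ (1 / lam, 1) (Icc 0 s) r :=
      (((hasDerivWithinAt_id r _).div_const lam).const_add t).prodMk
        ((hasDerivWithinAt_id r _).const_add x)
    refine (hw.comp_hasDerivWithinAt r hγ' hγ).congr_deriv ?_
    have := hpde _ (hγ hr).1 _ (hγ hr).2
    simp only [add_apply, ContinuousLinearMap.smulRight_apply, ContinuousLinearMap.coe_fst',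
      ContinuousLinearMap.coe_snd', smul_eq_mul]
    field_simp
    linarith
  have h := (convex_Icc 0 s).norm_image_sub_le_of_norm_hasDerivWithin_le hderiv
    (fun _ _ => le_of_eq norm_zero) ⟨le_rfl, hs⟩ ⟨hs, le_rfl⟩
  simp only [zero_mul, norm_le_zero_iff, sub_eq_zero, γ, comp_apply, zero_div, add_zero] at h
  exact h

lemma hasDerivAt_Mfun (a lam c x : ℝ) :
    HasDerivAt (Mfun a lam c) (a / lam * Mfun a lam c x) x := by
  have := ((hasDerivAt_id x).const_mul (a / lam)).exp.const_mul (c / (1 - Real.exp (a / lam)))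
  exact this.congr_deriv (by simp only [Mfun, id]; ring)

lemma continuous_Mfun (a lam c : ℝ) : Continuous (Mfun a lam c) := by
  unfold Mfun
  fun_prop

lemma Mfun_zero_sub_Mfun_one {a lam : ℝ} (c : ℝ) (h : a / lam ≠ 0) :
    Mfun a lam c 0 - Mfun a lam c 1 = c := by
  have : 1 - Real.exp (a / lam) ≠ 0 :=
    sub_ne_zero.2 fun h' => h ((Real.exp_eq_one_iff _).1 h'.symm)
  unfold Mfun
  field_simp
  simp

theorem integral_Mfun_mul_deriv {a lam c : ℝ} (h : a / lam ≠ 0) {u u' : ℝ → ℝ}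
    (hu : ∀ x ∈ Icc (0:ℝ) 1, HasDerivWithinAt u (u' x) (Icc 0 1) x)
    (hu' : IntervalIntegrable u' volume 0 1) (hper : u 0 = u 1)
    (hout : ∫ x in (0:ℝ)..1, Mfun a lam c x * u x = 0) :
    ∫ x in (0:ℝ)..1, Mfun a lam c x * u' x = -c * u 1 := by
  rw [← uIcc_of_le zero_le_one] at hu
  rw [intervalIntegral.integral_mul_deriv_eq_deriv_mul_of_hasDerivWithinAt
    (fun x _ => (hasDerivAt_Mfun a lam c x).hasDerivWithinAt) hu
    (((continuous_Mfun a lam c).intervalIntegrable 0 1).const_mul (a / lam)) hu']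
  simp_rw [mul_assoc, intervalIntegral.integral_const_mul, hout, hper]
  linear_combination (-u 1) * Mfun_zero_sub_Mfun_one c h

theorem integral_integral_mul_timeDeriv {g : ℝ → ℝ} (hg : ContinuousOn g (Icc 0 1))
    {w wt : ℝ → ℝ → ℝ}
    (hwt : ∀ t ∈ Ici (0:ℝ), ∀ x ∈ Icc (0:ℝ) 1,
      HasDerivWithinAt (fun τ => w τ x) (wt t x) (Ici 0) t)
    (hwtc : ContinuousOn (fun q : ℝ × ℝ => wt q.1 q.2) (Ici 0 ×ˢ Icc 0 1))
    {T : ℝ} (hT : 0 ≤ T) :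
    ∫ s in (0:ℝ)..T, ∫ x in (0:ℝ)..1, g x * wt s x =
      ∫ x in (0:ℝ)..1, g x * (w T x - w 0 x) := by
  have hcont : ContinuousOn (fun q : ℝ × ℝ => g q.2 * wt q.1 q.2) (Icc 0 T ×ˢ Icc 0 1) :=
    (hg.comp continuousOn_snd fun q hq => hq.2).mul
      (hwtc.mono (prod_mono Icc_subset_Ici_self subset_rfl))
  rw [intervalIntegral_intervalIntegral_swap]
  · refine intervalIntegral.integral_congr fun x hx => ?_
    rw [uIcc_of_le zero_le_one] at hx
    rw [intervalIntegral.integral_const_mul]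
    congr 1
    refine intervalIntegral.integral_eq_sub_of_hasDeriv_right_of_le hT
      (fun s hs => (hwt s hs.1 x hx).continuousWithinAt.mono Icc_subset_Ici_self)
      (fun s hs => (hwt s hs.1.le x hx).mono (Ioi_subset_Ici hs.1.le)) ?_
    exact (hwtc.comp (continuousOn_id.prodMk continuousOn_const)
      fun s hs => ⟨hs.1, hx⟩).intervalIntegrable_of_Icc hT
  · rw [uIoc_of_le hT, uIoc_of_le zero_le_one]
    exact (hcont.integrableOn_compact (isCompact_Icc.prod isCompact_Icc)).mono_set
      (prod_mono Ioc_subset_Icc_self Ioc_subset_Icc_self)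

theorem eqOn_zero_of_forall_intervalIntegral_eq_zero {E : Type*} [NormedAddCommGroup E]
    [NormedSpace ℝ E] [CompleteSpace E] {f : ℝ → E} {a : ℝ} (hf : ContinuousOn f (Ici a))
    (h : ∀ T ∈ Ici a, ∫ s in a..T, f s = 0) : EqOn f 0 (Ici a) := by
  intro T hT
  have hsub : Ioi T ⊆ Ici a := Ioi_subset_Ici hT
  have hF : HasDerivWithinAt (fun u => ∫ s in a..u, f s) (f T) (Ici T) T :=
    intervalIntegral.integral_hasDerivWithinAt_right
      ((hf.mono Icc_subset_Ici_self).intervalIntegrable_of_Icc hT)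
      ((hf.mono hsub).stronglyMeasurableAtFilter_nhdsWithin measurableSet_Ioi T)
      ((hf T hT).mono hsub)
  have h0 : HasDerivWithinAt (fun u => ∫ s in a..u, f s) 0 (Ici T) T :=
    (hasDerivWithinAt_const T _ 0).congr (fun u hu => h u (Ici_subset_Ici.2 hT hu)) (h T hT)
  exact (uniqueDiffOn_Ici T T self_mem_Ici).eq_deriv _ hF h0

/-- If a C¹ solution `w` of the transport equation `w_t + λw_x = 0` on
`[0,∞) × [0,1]` with periodic boundary condition `w(t,0) = w(t,1)` has zero forwarding
output `∫₀¹ M(x)w(t,x)dx = 0` for all `t ≥ 0`, then `w` vanishes identically on `[0,∞) × [0,1]`. -/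
theorem statement16 (a lam c : ℝ) (ha : 0 < a) (hlam : 0 < lam) (hc : 0 < c)
    (w wt wx : ℝ → ℝ → ℝ)
    -- w is continuously differentiable with partial derivatives wt, wx:
    (hwt : ∀ t ∈ Set.Ici (0:ℝ), ∀ x ∈ Set.Icc (0:ℝ) 1,
      HasDerivWithinAt (fun τ => w τ x) (wt t x) (Set.Ici 0) t)
    (hwx : ∀ t ∈ Set.Ici (0:ℝ), ∀ x ∈ Set.Icc (0:ℝ) 1,
      HasDerivWithinAt (fun y => w t y) (wx t x) (Set.Icc 0 1) x)
    (hwtc : ContinuousOn (fun q : ℝ × ℝ => wt q.1 q.2) (Set.Ici 0 ×ˢ Set.Icc 0 1))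
    (hwxc : ContinuousOn (fun q : ℝ × ℝ => wx q.1 q.2) (Set.Ici 0 ×ˢ Set.Icc 0 1))
    -- the transport equation:
    (hpde : ∀ t ∈ Set.Ici (0:ℝ), ∀ x ∈ Set.Icc (0:ℝ) 1, wt t x + lam * wx t x = 0)
    -- the boundary condition:
    (hbc : ∀ t ∈ Set.Ici (0:ℝ), w t 0 = w t 1)
    -- the output condition:
    (hout : ∀ t ∈ Set.Ici (0:ℝ), (∫ x in (0:ℝ)..1, Mfun a lam c x * w t x) = 0) :
    ∀ t ∈ Set.Ici (0:ℝ), ∀ x ∈ Set.Icc (0:ℝ) 1, w t x = 0 := by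
  have hMwt : ∀ t ∈ Ici (0:ℝ), ∫ x in (0:ℝ)..1, Mfun a lam c x * wt t x = lam * c * w t 1 := by
    intro t ht
    have hwx_int : IntervalIntegrable (wx t) volume 0 1 :=
      (hwxc.comp (continuousOn_const.prodMk continuousOn_id) fun x hx => ⟨ht, hx⟩)
        |>.intervalIntegrable_of_Icc zero_le_one
    have hwt_eq : EqOn (fun x => Mfun a lam c x * wt t x)
        (fun x => -lam * (Mfun a lam c x * wx t x)) (uIcc 0 1) := fun x hx => by
      rw [uIcc_of_le zero_le_one] at hx
      linear_combination Mfun a lam c x * hpde t ht x hx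
    rw [intervalIntegral.integral_congr hwt_eq, intervalIntegral.integral_const_mul,
      integral_Mfun_mul_deriv (div_pos ha hlam).ne' (hwx t ht) hwx_int (hbc t ht) (hout t ht)]
    ring
  have hbdry : EqOn (fun T => w T 1) 0 (Ici 0) := by
    refine eqOn_zero_of_forall_intervalIntegral_eq_zero
      (fun T hT => (hwt T hT 1 ⟨zero_le_one, le_rfl⟩).continuousWithinAt) fun T hT => ?_
    have hMw : ∀ t ∈ Ici (0:ℝ), IntervalIntegrable (fun x => Mfun a lam c x * w t x) volume 0 1 :=
      fun t ht => ((continuous_Mfun a lam c).continuousOn.mul fun x hx =>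
        (hwx t ht x hx).continuousWithinAt).intervalIntegrable_of_Icc zero_le_one
    have h := integral_integral_mul_timeDeriv (continuous_Mfun a lam c).continuousOn hwt hwtc hT
    simp_rw [mul_sub] at h
    rw [intervalIntegral.integral_congr fun s hs => hMwt s (uIcc_of_le (mem_Ici.1 hT) ▸ hs).1,
      intervalIntegral.integral_const_mul, intervalIntegral.integral_sub (hMw T hT)
      (hMw 0 self_mem_Ici), hout T hT, hout 0 self_mem_Ici, sub_zero] at h
    exact (mul_eq_zero.1 h).resolve_left (by positivity)
  intro t ht x hx
  rw [← transport_eq_along_characteristic hlam hwt hwx hwtc hpde ht hx.1 (sub_nonneg.2 hx.2)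
    (by linarith), add_sub_cancel]
  exact hbdry (add_nonneg ht (div_nonneg (sub_nonneg.2 hx.2) hlam.le))
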